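/- arXiv:1007.3049 — 3 statements merged into one kernel-verified Lean document; each statement's English description precedes it below -/
import Mathlib

section
/- For every n ≥ 2, the tournament T_{2n+1} is critical: it is indecomposable, and for every vertex x, the tournament T_{2n+1} − x is decomposable. -/
/-- A tournament on vertex type `V`, given by its arc relation. -/
def IsTournament {V : Type*} (r : V → V → Prop) : Prop :=
  (∀ x, ¬ r x x) ∧ ∀ x y : V, x ≠ y → (r x y ↔ ¬ r y x)

/-- `I` is an interval of the subtournament of `r` induced on `X`. -/
def IsIntervalOn {V : Type*} (r : V → V → Prop) (X I : Set V) : Prop :=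
  I ⊆ X ∧ ∀ x ∈ X \ I, (∀ i ∈ I, r x i) ∨ (∀ i ∈ I, r i x)

/-- The subtournament induced on `X` is indecomposable: all its intervals are trivial. -/
def IndecomposableOn {V : Type*} (r : V → V → Prop) (X : Set V) : Prop :=
  ∀ I : Set V, IsIntervalOn r X I → I = ∅ ∨ (∃ a, I = {a}) ∨ I = X

/-- The dual tournament, obtained by reversing all arcs. -/
def dual {V : Type*} (r : V → V → Prop) : V → V → Prop := fun x y => r y x

/-- `s` embeds into `r`: `s` is isomorphic to an induced subtournament of `r`. -/
def Embeds {W V : Type*} (s : W → W → Prop) (r : V → V → Prop) : Prop :=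
  ∃ f : W → V, Function.Injective f ∧ ∀ a b, s a b ↔ r (f a) (f b)

/-- The 3-cycle C₃. -/
def C3 : ZMod 3 → ZMod 3 → Prop := fun i j => j = i + 1

/-- The critical tournament `T_{2n+1}` on `ZMod (2n+1)`: arc `i → j` iff `j - i ∈ {1,…,n}`. -/
def Tt (n : ℕ) : ZMod (2*n+1) → ZMod (2*n+1) → Prop :=
  fun i j => (j - i).val ∈ Finset.Icc 1 n

/-- The critical tournament `W_{2n+1}` on `Fin (2n+1)`:
`0 < 1 < ⋯ < 2n-1` and odds → `2n` → evens. -/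
def Wt (n : ℕ) : Fin (2*n+1) → Fin (2*n+1) → Prop :=
  fun i j =>
    if i.val = 2*n then j.val % 2 = 0 ∧ j.val ≠ 2*n
    else if j.val = 2*n then i.val % 2 = 1
    else i.val < j.val

/-- The diamond `D₄`: `{0,1,2}` is a 3-cycle and `3 → {0,1,2}`. -/
def D4 : Fin 4 → Fin 4 → Prop :=
  fun i j => (i = 3 ∧ j ≠ 3) ∨ (i ≠ 3 ∧ j ≠ 3 ∧ j.val = (i.val + 1) % 3)

/-- `U₅`: obtained from `T₅` by reversing the arc inside `{3,4}`. -/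
def U5 : ZMod 5 → ZMod 5 → Prop :=
  fun i j =>
    if (i = 3 ∧ j = 4) ∨ (i = 4 ∧ j = 3) then Tt 2 j i else Tt 2 i j

/-- The tournament `F_{n+1}` on `{0,…,n}`: arc `i → j` iff `i+1 < j` or `i = j+1`. -/
def Ft (n : ℕ) : Fin (n+1) → Fin (n+1) → Prop :=
  fun i j => i.val + 1 < j.val ∨ i.val = j.val + 1

/-- `Ext(X)`: vertices outside `X` extending `X` indecomposably. -/
def ExtSet {V : Type*} (r : V → V → Prop) (X : Set V) : Set V :=
  {x | x ∉ X ∧ IndecomposableOn r (X ∪ {x})}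

/-- `[X]`: vertices outside `X` relating uniformly to `X`. -/
def BrSet {V : Type*} (r : V → V → Prop) (X : Set V) : Set V :=
  {x | x ∉ X ∧ ((∀ y ∈ X, r x y) ∨ (∀ y ∈ X, r y x))}

/-- `X(u)`: vertices `x` outside `X` such that `{u,x}` is an interval of `T(X ∪ {x})`. -/
def XuSet {V : Type*} (r : V → V → Prop) (X : Set V) (u : V) : Set V :=
  {x | x ∉ X ∧ IsIntervalOn r (X ∪ {x}) {u, x}}

/-!
Arcs of `T_{2n+1}` go from `i` to `i + k` with `1 ≤ k ≤ n`. If an interval contains an arc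
`a → b`, then `b → a - n → a`, so `a - n` lies in the interval as well; as `a - n → a` is again
an arc, the interval contains every `a - kn`, hence every vertex, because `-2n = 1`.
After deleting `x`, the pair `{x + n, x + n + 1}` is an interval: the vertices `x + d` with
`d < n` dominate it and those with `d > n + 1` are dominated by it.
-/

section Intervals

variable {V : Type*} {r : V → V → Prop}

theorem IsTournament.asymm (hr : IsTournament r) {x y : V} (hxy : r x y) : ¬ r y x := by
  have hne : x ≠ y := by rintro rfl; exact hr.1 x hxy
  exact (hr.2 x y hne).mp hxy

theorem IsTournament.total (hr : IsTournament r) {x y : V} (hne : x ≠ y) : r x y ∨ r y x := by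
  rw [hr.2 x y hne]
  exact em' (r y x)

theorem IsIntervalOn.mem_of_rel_of_rel (hr : IsTournament r) {X I : Set V}
    (hI : IsIntervalOn r X I) {a b c : V} (ha : a ∈ I) (hb : b ∈ I) (hc : c ∈ X)
    (hca : r c a) (hbc : r b c) : c ∈ I := by
  by_contra hcI
  rcases hI.2 c ⟨hc, hcI⟩ with hdom | hdom
  · exact hr.asymm hbc (hdom b hb)
  · exact hr.asymm hca (hdom a ha)

theorem indecomposableOn_of_forall_eq {X : Set V} (hI : ∀ I, IsIntervalOn r X I →
    ∀ a ∈ I, ∀ b ∈ I, a ≠ b → I = X) : IndecomposableOn r X := by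
  intro I hIX
  rcases I.eq_empty_or_nonempty with hempty | ⟨a, ha⟩
  · exact Or.inl hempty
  by_cases hsingle : ∀ b ∈ I, b = a
  · exact Or.inr (Or.inl ⟨a, Set.eq_singleton_iff_unique_mem.mpr ⟨ha, hsingle⟩⟩)
  push Not at hsingle
  obtain ⟨b, hb, hba⟩ := hsingle
  exact Or.inr (Or.inr (hI I hIX a ha b hb hba.symm))

theorem not_indecomposableOn_of_isIntervalOn {X I : Set V} (hI : IsIntervalOn r X I)
    {a b c : V} (ha : a ∈ I) (hb : b ∈ I) (hab : a ≠ b) (hc : c ∈ X) (hcI : c ∉ I) :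
    ¬ IndecomposableOn r X := by
  intro hX
  rcases hX I hI with hempty | ⟨d, rfl⟩ | rfl
  · simp [hempty] at ha
  · exact hab (ha.trans hb.symm)
  · exact hcI hc

end Intervals

section ZModFacts

variable {m : ℕ}

theorem add_natCast_ne_add_natCast {k l : ℕ} (x : ZMod m) (hk : k < m) (hl : l < m)
    (hkl : k ≠ l) : x + k ≠ x + l := by
  rw [Ne, add_right_inj, ZMod.natCast_eq_natCast_iff', Nat.mod_eq_of_lt hk, Nat.mod_eq_of_lt hl]
  exact hkl

theorem add_natCast_ne_self {k : ℕ} (x : ZMod m) (hk0 : k ≠ 0) (hk : k < m) : x + k ≠ x := by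
  simpa using add_natCast_ne_add_natCast x hk (l := 0) (by omega) hk0

theorem two_mul_mul_eq_neg (n k : ℕ) : (2 * k * n : ZMod (2*n+1)) = -k := by
  have h : ((2*n+1 : ℕ) : ZMod (2*n+1)) = 0 := ZMod.natCast_self _
  push_cast at h
  linear_combination k * h

end ZModFacts

namespace Tt

variable {n : ℕ}

theorem iff_val {i j : ZMod (2*n+1)} : Tt n i j ↔ 1 ≤ (j - i).val ∧ (j - i).val ≤ n :=
  Finset.mem_Icc

theorem isTournament (n : ℕ) : IsTournament (Tt n) := by
  refine ⟨fun x => by simp [iff_val], fun x y hxy => ?_⟩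
  have hne : y - x ≠ 0 := sub_ne_zero.mpr hxy.symm
  have hpos : (y - x).val ≠ 0 := (ZMod.val_ne_zero _).mpr hne
  have hlt := (y - x).val_lt
  rw [iff_val, iff_val, ← neg_sub y x, ZMod.neg_val, if_neg hne]
  omega

theorem add_natCast_of_lt {k l : ℕ} (x : ZMod (2*n+1)) (hkl : k < l) (hlk : l ≤ k + n)
    (hl : l < 2*n+1) : Tt n (x + k) (x + l) := by
  have hsub : x + l - (x + k) = ((l - k : ℕ) : ZMod (2*n+1)) := by
    rw [Nat.cast_sub hkl.le]; ring
  rw [iff_val, hsub, ZMod.val_cast_of_lt (by omega)]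
  omega

theorem sub_n (hn : 1 ≤ n) (a : ZMod (2*n+1)) : Tt n (a - n) a := by
  simpa using add_natCast_of_lt (a - (n : ZMod (2*n+1))) (k := 0) (l := n)
    (by omega) (by omega) (by omega)

theorem rel_sub_n {a b : ZMod (2*n+1)} (hab : Tt n a b) : Tt n b (a - n) := by
  rw [iff_val] at hab ⊢
  have hsum : ((n + (b - a).val : ℕ) : ZMod (2*n+1)) ≠ 0 := by
    rw [Ne, ← ZMod.val_eq_zero, ZMod.val_cast_of_lt (by omega)]
    omega
  have hsub : a - n - b = -((n + (b - a).val : ℕ) : ZMod (2*n+1)) := by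
    push_cast; rw [ZMod.natCast_zmod_val]; ring
  rw [hsub, ZMod.neg_val, if_neg hsum, ZMod.val_cast_of_lt (by omega)]
  omega

theorem eq_univ_of_isIntervalOn (hn : 1 ≤ n) {I : Set (ZMod (2*n+1))}
    (hI : IsIntervalOn (Tt n) Set.univ I) {a b : ZMod (2*n+1)} (ha : a ∈ I) (hb : b ∈ I)
    (hab : Tt n a b) : I = Set.univ := by
  have hwalk : ∀ k : ℕ, a - k * n ∈ I ∧ ∃ c ∈ I, Tt n (a - k * n) c := by
    intro k
    induction k with
    | zero => simpa using ⟨ha, b, hb, hab⟩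
    | succ k ih =>
      obtain ⟨hk, c, hc, hkc⟩ := ih
      have hnext : a - (k + 1 : ℕ) * n = a - k * n - n := by push_cast; ring
      rw [hnext]
      exact ⟨hI.mem_of_rel_of_rel (isTournament n) hk hc trivial (sub_n hn _)
        (rel_sub_n hkc), _, hk, sub_n hn _⟩
  refine Set.eq_univ_of_forall fun z => ?_
  have hz : z = a - (2 * (z - a).val : ℕ) * n := by
    push_cast
    rw [two_mul_mul_eq_neg, ZMod.natCast_zmod_val]
    ring
  rw [hz]
  exact (hwalk _).1

theorem indecomposableOn_univ (hn : 1 ≤ n) : IndecomposableOn (Tt n) Set.univ :=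
  indecomposableOn_of_forall_eq fun _ hI _ ha _ hb hab =>
    ((isTournament n).total hab).elim (eq_univ_of_isIntervalOn hn hI ha hb)
      (eq_univ_of_isIntervalOn hn hI hb ha)

theorem isIntervalOn_compl_singleton (hn : 1 ≤ n) (x : ZMod (2*n+1)) :
    IsIntervalOn (Tt n) {x}ᶜ {x + n, x + (n + 1 : ℕ)} := by
  refine ⟨?_, ?_⟩
  · rintro _ (rfl | rfl) <;> exact add_natCast_ne_self x (by omega) (by omega)
  · rintro z ⟨hzx, hzI⟩
    obtain ⟨d, hd, rfl⟩ : ∃ d < 2*n+1, z = x + d :=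
      ⟨(z - x).val, (z - x).val_lt, by rw [ZMod.natCast_zmod_val]; ring⟩
    have hd0 : d ≠ 0 := by rintro rfl; simp at hzx
    have hdn : d ≠ n := by rintro rfl; exact hzI (Set.mem_insert _ _)
    have hdn1 : d ≠ n + 1 := by rintro rfl; exact hzI (Set.mem_insert_of_mem _ rfl)
    rcases Nat.lt_or_gt_of_ne hdn with hlt | hgt
    · left
      rintro _ (rfl | rfl) <;> exact add_natCast_of_lt x (by omega) (by omega) (by omega)
    · right
      rintro _ (rfl | rfl) <;> exact add_natCast_of_lt x (by omega) (by omega) (by omega)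

theorem not_indecomposableOn_compl_singleton (hn : 2 ≤ n) (x : ZMod (2*n+1)) :
    ¬ IndecomposableOn (Tt n) {x}ᶜ := by
  refine not_indecomposableOn_of_isIntervalOn (isIntervalOn_compl_singleton (by omega) x)
    (c := x + (1 : ℕ)) (Set.mem_insert _ _) (Set.mem_insert_of_mem _ rfl)
    (add_natCast_ne_add_natCast x (by omega) (by omega) (by omega))
    (add_natCast_ne_self x (by omega) (by omega)) ?_
  rintro (h | h) <;> exact add_natCast_ne_add_natCast x (by omega) (by omega) (by omega) h

end Tt

/-- For `n ≥ 2`, `T_{2n+1}` is critical: indecomposable, and deleting any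
vertex yields a decomposable tournament. -/
theorem Tt_critical (n : ℕ) (hn : 2 ≤ n) :
    IndecomposableOn (Tt n) Set.univ ∧
      ∀ x : ZMod (2*n+1), ¬ IndecomposableOn (Tt n) {x}ᶜ :=
  ⟨Tt.indecomposableOn_univ (by omega), Tt.not_indecomposableOn_compl_singleton hn⟩
end

section
/- Let T = (V,A) be a tournament and X ⊆ V with |X| ≥ 3 and T(X) indecomposable. For distinct x, y ∈ Ext(X), if T(X ∪ {x,y}) is decomposable, then {x,y} is an interval of T(X ∪ {x,y}). -/
/-!
If `I` is a nontrivial proper interval of `T(X ∪ {x, y})`, then its trace on `X ∪ {x}` is an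
interval of the indecomposable `T(X ∪ {x})`, and it cannot be all of `X ∪ {x}`: otherwise `y`
would lie outside `I` and dominate or be dominated by `X`, making `X` a nontrivial proper interval
of `T(X ∪ {y})`. So `I` meets each of `X ∪ {x}` and `X ∪ {y}` in at most one vertex, hence misses
`X`, and being nontrivial it is `{x, y}`.
-/

section

variable {V : Type*} {r : V → V → Prop}

namespace IsIntervalOn

variable {S I : Set V}

lemma inter_of_subset (hI : IsIntervalOn r S I) {T : Set V} (hT : T ⊆ S) :
    IsIntervalOn r T (I ∩ T) := by
  refine ⟨Set.inter_subset_right, fun z hz => ?_⟩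
  rcases hI.2 z ⟨hT hz.1, fun hzI => hz.2 ⟨hzI, hz.1⟩⟩ with h | h
  · exact Or.inl fun i hi => h i hi.1
  · exact Or.inr fun i hi => h i hi.1

lemma union_singleton_of_subset (hI : IsIntervalOn r S I) {J : Set V} (hJ : J ⊆ I) {y : V}
    (hy : y ∈ S \ I) : IsIntervalOn r (J ∪ {y}) J := by
  refine ⟨Set.subset_union_left, fun z hz => ?_⟩
  obtain rfl : z = y := hz.1.resolve_left hz.2
  rcases hI.2 z hy with h | h
  · exact Or.inl fun i hi => h i (hJ hi)
  · exact Or.inr fun i hi => h i (hJ hi)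

end IsIntervalOn

lemma IndecomposableOn.eq_of_isIntervalOn {S I : Set V} (hS : IndecomposableOn r S)
    (hI : IsIntervalOn r S I) (hnt : I.Nontrivial) : I = S := by
  rcases hS I hI with rfl | ⟨a, rfl⟩ | h
  exacts [absurd hnt Set.not_nontrivial_empty, absurd hnt Set.not_nontrivial_singleton, h]

lemma subsingleton_inter_of_mem_ExtSet {X I : Set V} {x y : V} (hX : X.Nontrivial)
    (hx : x ∈ ExtSet r X) (hy : y ∈ ExtSet r X) (hI : IsIntervalOn r (X ∪ {x, y}) I) (hIS : I ≠ X ∪ {x, y}) :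
    (I ∩ (X ∪ {x})).Subsingleton := by
  rw [← Set.not_nontrivial_iff]
  intro hnt
  have hxS : X ∪ {x} ⊆ X ∪ {x, y} := Set.union_subset_union_right X (by simp)
  have hxI : X ∪ {x} ⊆ I :=
    Set.inter_eq_right.mp (hx.2.eq_of_isIntervalOn (hI.inter_of_subset hxS) hnt)
  have hyI : y ∉ I := fun hyI =>
    hIS (hI.1.antisymm (Set.union_subset (hxI.trans' Set.subset_union_left)
      (Set.pair_subset (hxI (Or.inr rfl)) hyI)))
  have hXy : IsIntervalOn r (X ∪ {y}) X :=
    hI.union_singleton_of_subset (hxI.trans' Set.subset_union_left) ⟨by simp, hyI⟩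
  exact hy.1 ((hy.2.eq_of_isIntervalOn hXy hX).symm ▸ Or.inr rfl)

end

theorem Ext_extension_interval_general {V : Type*} (r : V → V → Prop) (X : Set V)
    (hX : 3 ≤ X.ncard)
    (x y : V) (hx : x ∈ ExtSet r X) (hy : y ∈ ExtSet r X)
    (hdec : ¬ IndecomposableOn r (X ∪ {x, y})) :
    IsIntervalOn r (X ∪ {x, y}) {x, y} := by
  simp only [IndecomposableOn, not_forall, not_or] at hdec
  obtain ⟨I, hI, hIe, hIs, hIS⟩ := hdec
  have hInt : I.Nontrivial :=
    ((Set.nonempty_iff_ne_empty.mpr hIe).exists_eq_singleton_or_nontrivial).resolve_left hIs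
  have hXnt : X.Nontrivial := (Set.one_lt_ncard_iff_nontrivial_and_finite.mp (by omega)).1
  have hIx := subsingleton_inter_of_mem_ExtSet hXnt hx hy hI hIS
  have hIy := subsingleton_inter_of_mem_ExtSet hXnt hy hx (Set.pair_comm x y ▸ hI)
    (Set.pair_comm x y ▸ hIS)
  have hIxy : I ⊆ {x, y} := by
    intro a haI
    refine (hI.1 haI).resolve_left fun haX => ?_
    obtain ⟨b, hbI, hba⟩ := hInt.exists_ne a
    rcases hI.1 hbI with hbX | rfl | rfl
    · exact hba (hIx ⟨hbI, Or.inl hbX⟩ ⟨haI, Or.inl haX⟩)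
    · exact hba (hIx ⟨hbI, Or.inr rfl⟩ ⟨haI, Or.inl haX⟩)
    · exact hba (hIy ⟨hbI, Or.inr rfl⟩ ⟨haI, Or.inl haX⟩)
  rcases Set.subset_pair_iff_eq.mp hIxy with rfl | rfl | rfl | rfl
  exacts [absurd rfl hIe, absurd ⟨x, rfl⟩ hIs, absurd ⟨y, rfl⟩ hIs, hI]

/-- For distinct `x, y ∈ Ext(X)`, if `T(X ∪ {x,y})` is decomposable,
then `{x,y}` is an interval of `T(X ∪ {x,y})`. -/
theorem Ext_extension_interval {V : Type*} [Fintype V] (r : V → V → Prop) (X : Set V)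
    (h : IsTournament r) (hX : 3 ≤ X.ncard) (hind : IndecomposableOn r X)
    (x y : V) (hx : x ∈ ExtSet r X) (hy : y ∈ ExtSet r X) (hxy : x ≠ y)
    (hdec : ¬ IndecomposableOn r (X ∪ {x, y})) :
    IsIntervalOn r (X ∪ {x, y}) {x, y} :=
  Ext_extension_interval_general r X hX x y hx hy hdec
end

section
/- Let T = (V,A) be an indecomposable tournament and X ⊆ V with |X| ≥ 3, |V − X| ≥ 2, and T(X) indecomposable. Then there exist distinct x, y ∈ V − X such that T(X ∪ {x,y}) is indecomposable. -/
/-!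
Suppose no two outside vertices extend `X`. By Ehrenfeucht–Rozenberg, every `z ∉ X` is of
exactly one of three kinds: `X ∪ {z}` is indecomposable (`z ∈ ExtSet r X`), `z` relates uniformly
to `X` (`z ∈ BrSet r X`), or `{u, z}` is an interval of `X ∪ {z}` for a unique `u ∈ X`
(`z ∈ XuSet r X u`). Reading off a nontrivial interval of `X ∪ {x, y}` tells how two outside
vertices `x`, `y` of given kinds are related, and these relations make one of `{u} ∪ X(u)`
(if some `X(u)` is nonempty), `X ∪ Ext(X)` (otherwise, if `[X]` is nonempty) or `V ∖ X = Ext(X)`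
a nontrivial interval of the indecomposable tournament, a contradiction.
-/

section

variable {V : Type*} {r : V → V → Prop} {X S I : Set V}

namespace IsTournament

theorem not_rel_iff (h : IsTournament r) {a b : V} (hab : a ≠ b) : ¬ r a b ↔ r b a := by
  rw [h.2 a b hab, not_not]

theorem rel_iff_rel_swap (h : IsTournament r) {a x y : V} (hx : a ≠ x) (hy : a ≠ y) :
    (r a x ↔ r a y) ↔ (r x a ↔ r y a) := by
  rw [← h.not_rel_iff hx, ← h.not_rel_iff hy, not_iff_not]

theorem uniform_iff (h : IsTournament r) {z : V} (hz : z ∉ I) :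
    ((∀ i ∈ I, r z i) ∨ (∀ i ∈ I, r i z)) ↔ ∀ a ∈ I, ∀ b ∈ I, (r z a ↔ r z b) := by
  have hne : ∀ i ∈ I, z ≠ i := fun i hi hzi => hz (hzi ▸ hi)
  constructor
  · rintro (hzI | hIz) a ha b hb
    · exact iff_of_true (hzI a ha) (hzI b hb)
    · exact iff_of_false ((h.not_rel_iff (hne a ha)).2 (hIz a ha))
        ((h.not_rel_iff (hne b hb)).2 (hIz b hb))
  · intro hagree
    by_cases hI : ∃ a ∈ I, r z a
    · obtain ⟨a, ha, hza⟩ := hI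
      exact Or.inl fun i hi => (hagree a ha i hi).1 hza
    · push Not at hI
      exact Or.inr fun i hi => (h.not_rel_iff (hne i hi)).1 (hI i hi)

theorem isIntervalOn_iff (h : IsTournament r) :
    IsIntervalOn r S I ↔ I ⊆ S ∧ ∀ z ∈ S, z ∉ I → ∀ a ∈ I, ∀ b ∈ I, (r z a ↔ r z b) := by
  refine and_congr_right fun _ => ⟨fun hI z hzS hzI => ?_, fun hI z hz => ?_⟩
  · exact (h.uniform_iff hzI).1 (hI z ⟨hzS, hzI⟩)
  · exact (h.uniform_iff hz.2).2 (hI z hz.1 hz.2)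

theorem isIntervalOn_of_rel_iff (h : IsTournament r) (hIS : I ⊆ S) {c : V}
    (hc : ∀ z ∈ S, z ∉ I → ∀ i ∈ I, (r z i ↔ r z c)) : IsIntervalOn r S I :=
  h.isIntervalOn_iff.2 ⟨hIS, fun z hz hzI a ha b hb =>
    (hc z hz hzI a ha).trans (hc z hz hzI b hb).symm⟩

theorem isIntervalOn_pair_iff (h : IsTournament r) {a b : V} (ha : a ∈ S) (hb : b ∈ S) :
    IsIntervalOn r S {a, b} ↔ ∀ z ∈ S, z ≠ a → z ≠ b → (r z a ↔ r z b) := by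
  simp only [h.isIntervalOn_iff, Set.insert_subset_iff, Set.singleton_subset_iff, ha, hb,
    Set.mem_insert_iff, Set.mem_singleton_iff, forall_eq_or_imp, forall_eq, not_or, true_and,
    and_true, and_imp]
  exact forall₂_congr fun z _ => imp_congr_right fun _ => imp_congr_right fun _ =>
    and_iff_left_of_imp Iff.symm

end IsTournament

theorem IsIntervalOn.rel_iff (h : IsTournament r) (hI : IsIntervalOn r S I) {z a b : V}
    (hz : z ∈ S) (hzI : z ∉ I) (ha : a ∈ I) (hb : b ∈ I) : r z a ↔ r z b :=
  (h.isIntervalOn_iff.1 hI).2 z hz hzI a ha b hb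

theorem IsIntervalOn.inter (hI : IsIntervalOn r S I) {Y : Set V} (hYS : Y ⊆ S) :
    IsIntervalOn r Y (I ∩ Y) :=
  ⟨Set.inter_subset_right, fun z hz => (hI.2 z ⟨hYS hz.1, fun hzI => hz.2 ⟨hzI, hz.1⟩⟩).imp
    (fun hzI i hi => hzI i hi.1) (fun hIz i hi => hIz i hi.1)⟩

theorem indecomposableOn_iff :
    IndecomposableOn r S ↔ ∀ I, IsIntervalOn r S I → I.Nontrivial → S ⊆ I := by
  refine ⟨fun hS I hI hnt => ?_, fun hS I hI => ?_⟩
  · rcases hS I hI with rfl | ⟨a, rfl⟩ | rfl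
    exacts [absurd hnt.ne_empty (not_not.2 rfl), absurd hnt Set.not_nontrivial_singleton, le_rfl]
  · rcases I.eq_empty_or_nonempty with hI0 | hne
    · exact Or.inl hI0
    rcases hne.exists_eq_singleton_or_nontrivial with hI1 | hnt
    · exact Or.inr (Or.inl hI1)
    · exact Or.inr (Or.inr (hI.1.antisymm (hS I hI hnt)))

theorem IndecomposableOn.subset_of_isIntervalOn (hS : IndecomposableOn r S)
    (hI : IsIntervalOn r S I) (hnt : I.Nontrivial) : S ⊆ I :=
  indecomposableOn_iff.1 hS I hI hnt

theorem exists_isIntervalOn_of_not_indecomposableOn (hS : ¬ IndecomposableOn r S) :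
    ∃ I, IsIntervalOn r S I ∧ I.Nontrivial ∧ ¬ S ⊆ I := by
  simpa [indecomposableOn_iff] using hS

theorem Set.exists_mem_ne_ne_of_three_le_ncard (hX : 3 ≤ X.ncard) (u v : V) :
    ∃ w ∈ X, w ≠ u ∧ w ≠ v := by
  have hpair : ({u, v} : Set V).ncard ≤ 2 :=
    (Set.ncard_insert_le u {v}).trans (by rw [Set.ncard_singleton])
  obtain ⟨w, hwX, hw⟩ : (X \ {u, v}).Nonempty :=
    Set.nonempty_of_ncard_ne_zero (by have := Set.le_ncard_sdiff {u, v} X; omega)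
  simp only [Set.mem_insert_iff, Set.mem_singleton_iff, not_or] at hw
  exact ⟨w, hwX, hw⟩

theorem mem_brSet_iff (h : IsTournament r) {x : V} :
    x ∈ BrSet r X ↔ x ∉ X ∧ ∀ a ∈ X, ∀ b ∈ X, (r x a ↔ r x b) :=
  and_congr_right h.uniform_iff

theorem mem_xuSet_iff (h : IsTournament r) {u x : V} (hu : u ∈ X) :
    x ∈ XuSet r X u ↔ x ∉ X ∧ ∀ w ∈ X, w ≠ u → (r w u ↔ r w x) := by
  refine and_congr_right fun hx => ?_
  rw [h.isIntervalOn_pair_iff (Or.inl hu) (Or.inr rfl)]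
  refine ⟨fun hI w hw hwu => hI w (Or.inl hw) hwu (ne_of_mem_of_not_mem hw hx), ?_⟩
  rintro hI w (hw | rfl) hwu hwx
  exacts [hI w hw hwu, absurd rfl hwx]

theorem disjoint_extSet_brSet (hX : X.Nontrivial) : Disjoint (ExtSet r X) (BrSet r X) := by
  refine Set.disjoint_left.2 fun x hxE hxB => hxE.1 ?_
  have hXI : IsIntervalOn r (X ∪ {x}) X := by
    refine ⟨Set.subset_union_left, fun z hz => ?_⟩
    obtain rfl : z = x := hz.1.resolve_left hz.2
    exact hxB.2
  exact hxE.2.subset_of_isIntervalOn hXI hX (Or.inr rfl)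

theorem disjoint_extSet_xuSet (hX : X.Nontrivial) {u : V} (hu : u ∈ X) :
    Disjoint (ExtSet r X) (XuSet r X u) := by
  refine Set.disjoint_left.2 fun x hxE hxu => ?_
  obtain ⟨w, hw, hwu⟩ := hX.exists_ne u
  have hsub := hxE.2.subset_of_isIntervalOn hxu.2
    (Set.nontrivial_pair (ne_of_mem_of_not_mem hu hxE.1)) (Or.inl hw)
  rcases hsub with rfl | rfl
  exacts [hwu rfl, hxE.1 hw]

theorem disjoint_brSet_xuSet (h : IsTournament r) (hind : IndecomposableOn r X)
    (hX : 3 ≤ X.ncard) {u : V} (hu : u ∈ X) : Disjoint (BrSet r X) (XuSet r X u) := by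
  refine Set.disjoint_left.2 fun x hxB hxu => ?_
  rw [mem_brSet_iff h] at hxB
  rw [mem_xuSet_iff h hu] at hxu
  obtain ⟨a, ha, hau, -⟩ := X.exists_mem_ne_ne_of_three_le_ncard hX u u
  obtain ⟨b, hb, hbu, hba⟩ := X.exists_mem_ne_ne_of_three_le_ncard hX u a
  have hswap : ∀ c ∈ X, c ≠ u → (r u c ↔ r x c) := fun c hc hcu =>
    (h.rel_iff_rel_swap hcu (ne_of_mem_of_not_mem hc hxu.1)).1 (hxu.2 c hc hcu)
  have hint : IsIntervalOn r X (X \ {u}) := by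
    refine h.isIntervalOn_iff.2 ⟨Set.sdiff_subset, fun z hz hzI c hc d hd => ?_⟩
    obtain rfl : z = u := by simpa [hz] using hzI
    exact (hswap c hc.1 hc.2).trans ((hxB.2 c hc.1 d hd.1).trans (hswap d hd.1 hd.2).symm)
  have hnt : (X \ {u}).Nontrivial := Set.nontrivial_of_pair_subset hba.symm
    (Set.insert_subset ⟨ha, hau⟩ (Set.singleton_subset_iff.2 ⟨hb, hbu⟩))
  exact (hind.subset_of_isIntervalOn hint hnt hu).2 rfl

theorem eq_of_mem_xuSet_of_rel_iff (h : IsTournament r) (hind : IndecomposableOn r X)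
    (hX : 3 ≤ X.ncard) {u v x y : V} (hu : u ∈ X) (hv : v ∈ X) (hxu : x ∈ XuSet r X u)
    (hyv : y ∈ XuSet r X v) (hxy : ∀ w ∈ X, (r w x ↔ r w y)) : u = v := by
  by_contra huv
  rw [mem_xuSet_iff h hu] at hxu
  rw [mem_xuSet_iff h hv] at hyv
  have hint : IsIntervalOn r X {u, v} := (h.isIntervalOn_pair_iff hu hv).2
    fun z hz hzu hzv => ((hxu.2 z hz hzu).trans (hxy z hz)).trans (hyv.2 z hz hzv).symm
  obtain ⟨w, hw, hwu, hwv⟩ := X.exists_mem_ne_ne_of_three_le_ncard hX u v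
  rcases hind.subset_of_isIntervalOn hint (Set.nontrivial_pair huv) hw with rfl | rfl
  exacts [hwu rfl, hwv rfl]

theorem mem_extSet_or_mem_brSet_or_mem_xuSet (h : IsTournament r) (hind : IndecomposableOn r X)
    {z : V} (hz : z ∉ X) : z ∈ ExtSet r X ∨ z ∈ BrSet r X ∨ ∃ u ∈ X, z ∈ XuSet r X u := by
  by_cases hE : IndecomposableOn r (X ∪ {z})
  · exact Or.inl ⟨hz, hE⟩
  obtain ⟨I, hI, hnt, hSI⟩ := exists_isIntervalOn_of_not_indecomposableOn hE
  rcases hind (I ∩ X) (hI.inter Set.subset_union_left) with hIX | ⟨a, hIX⟩ | hIX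
  · exact absurd (fun w hw => (hI.1 hw).resolve_left fun hwX => hIX.subset ⟨hw, hwX⟩)
      hnt.not_subset_singleton
  · obtain ⟨haI, haX⟩ : a ∈ I ∩ X := hIX ▸ rfl
    have hXI : ∀ w ∈ X, w ∈ I → w = a := fun w hw hwI => hIX.subset ⟨hwI, hw⟩
    have hzI : z ∈ I := by
      by_contra hzI
      exact hnt.not_subset_singleton fun w hw =>
        hXI w ((hI.1 hw).resolve_right fun hwz => hzI (hwz ▸ hw)) hw
    refine Or.inr (Or.inr ⟨a, haX, (mem_xuSet_iff h haX).2 ⟨hz, fun w hw hwa => ?_⟩⟩)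
    exact hI.rel_iff h (Or.inl hw) (fun hwI => hwa (hXI w hw hwI)) haI hzI
  · have hXI : X ⊆ I := fun w hw => (hIX.symm.subset hw).1
    have hzI : z ∉ I := fun hzI => hSI (Set.union_subset hXI (Set.singleton_subset_iff.2 hzI))
    exact Or.inr (Or.inl ((mem_brSet_iff h).2
      ⟨hz, fun a ha b hb => hI.rel_iff h (Or.inr rfl) hzI (hXI ha) (hXI hb)⟩))

theorem cases_of_not_indecomposableOn_union_pair (h : IsTournament r)
    (hind : IndecomposableOn r X) {x y : V} (hx : x ∉ X) (hy : y ∉ X)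
    (hdec : ¬ IndecomposableOn r (X ∪ {x, y})) :
    -- one disjunct for each possible nontrivial interval of `X ∪ {x, y}`: `{x, y}`, `{a, x, y}`,
    -- `{a, x}`, `{a, y}`, `X`, `X ∪ {x}`, `X ∪ {y}`
    (∀ w ∈ X, (r w x ↔ r w y)) ∨
    (∃ a ∈ X, x ∈ XuSet r X a ∧ y ∈ XuSet r X a) ∨
    (∃ a ∈ X, x ∈ XuSet r X a ∧ (r y a ↔ r y x)) ∨
    (∃ a ∈ X, y ∈ XuSet r X a ∧ (r x a ↔ r x y)) ∨
    (x ∈ BrSet r X ∧ y ∈ BrSet r X) ∨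
    (y ∈ BrSet r X ∧ ∀ w ∈ X, (r y x ↔ r y w)) ∨
    (x ∈ BrSet r X ∧ ∀ w ∈ X, (r x y ↔ r x w)) := by
  obtain ⟨I, hI, hnt, hSI⟩ := exists_isIntervalOn_of_not_indecomposableOn hdec
  have hxS : x ∈ X ∪ {x, y} := Or.inr (Or.inl rfl)
  have hyS : y ∈ X ∪ {x, y} := Or.inr (Or.inr rfl)
  rcases hind (I ∩ X) (hI.inter Set.subset_union_left) with hIX | ⟨a, hIX⟩ | hIX
  · have hXI : ∀ w ∈ X, w ∉ I := fun w hw hwI => hIX.subset ⟨hwI, hw⟩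
    have hIxy : I = {x, y} := by
      have hIsub : I ⊆ {x, y} := fun w hw => (hI.1 hw).resolve_left fun hwX => hXI w hwX hw
      rcases Set.subset_pair_iff_eq.1 hIsub with hI0 | hI1 | hI1 | hI2
      exacts [absurd hI0 hnt.ne_empty, absurd (hI1 ▸ hnt) Set.not_nontrivial_singleton,
        absurd (hI1 ▸ hnt) Set.not_nontrivial_singleton, hI2]
    subst hIxy
    exact Or.inl fun w hw => hI.rel_iff h (Or.inl hw) (hXI w hw) (Or.inl rfl) (Or.inr rfl)
  · obtain ⟨haI, haX⟩ : a ∈ I ∩ X := hIX ▸ rfl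
    have hXI : ∀ w ∈ X, w ∈ I → w = a := fun w hw hwI => hIX.subset ⟨hwI, hw⟩
    have hxu : ∀ z ∉ X, z ∈ I → z ∈ XuSet r X a := fun z hz hzI => (mem_xuSet_iff h haX).2
      ⟨hz, fun w hw hwa => hI.rel_iff h (Or.inl hw) (fun hwI => hwa (hXI w hw hwI)) haI hzI⟩
    by_cases hxI : x ∈ I <;> by_cases hyI : y ∈ I
    · exact Or.inr (Or.inl ⟨a, haX, hxu x hx hxI, hxu y hy hyI⟩)
    · exact Or.inr (Or.inr (Or.inl ⟨a, haX, hxu x hx hxI, hI.rel_iff h hyS hyI haI hxI⟩))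
    · exact Or.inr (Or.inr (Or.inr (Or.inl
        ⟨a, haX, hxu y hy hyI, hI.rel_iff h hxS hxI haI hyI⟩)))
    · refine absurd (fun w hw => ?_) (hnt.not_subset_singleton (x := a))
      rcases hI.1 hw with hwX | rfl | rfl
      exacts [hXI w hwX hw, absurd hw hxI, absurd hw hyI]
  · have hXI : X ⊆ I := fun w hw => (hIX.symm.subset hw).1
    have hbr : ∀ z ∈ X ∪ {x, y}, z ∉ X → z ∉ I → z ∈ BrSet r X := fun z hz hzX hzI =>
      (mem_brSet_iff h).2 ⟨hzX, fun p hp q hq => hI.rel_iff h hz hzI (hXI hp) (hXI hq)⟩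
    refine Or.inr (Or.inr (Or.inr (Or.inr ?_)))
    by_cases hxI : x ∈ I <;> by_cases hyI : y ∈ I
    · exact absurd (Set.union_subset hXI (Set.insert_subset hxI (Set.singleton_subset_iff.2 hyI)))
        hSI
    · exact Or.inr (Or.inl ⟨hbr y hyS hy hyI, fun w hw => hI.rel_iff h hyS hyI hxI (hXI hw)⟩)
    · exact Or.inr (Or.inr ⟨hbr x hxS hx hxI, fun w hw => hI.rel_iff h hxS hxI hyI (hXI hw)⟩)
    · exact Or.inl ⟨hbr x hxS hx hxI, hbr y hyS hy hyI⟩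

theorem rel_iff_of_mem_extSet_of_mem_extSet (h : IsTournament r) (hind : IndecomposableOn r X)
    (hX : X.Nontrivial) {x y : V} (hxE : x ∈ ExtSet r X) (hyE : y ∈ ExtSet r X)
    (hdec : ¬ IndecomposableOn r (X ∪ {x, y})) : ∀ w ∈ X, (r w x ↔ r w y) := by
  have hB := (disjoint_extSet_brSet (r := r) hX).notMem_of_mem_left
  have hP := fun {a} (ha : a ∈ X) => (disjoint_extSet_xuSet (r := r) hX ha).notMem_of_mem_left
  rcases cases_of_not_indecomposableOn_union_pair h hind hxE.1 hyE.1 hdec with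
    hagree | ⟨a, ha, hxa, -⟩ | ⟨a, ha, hxa, -⟩ | ⟨a, ha, hya, -⟩ | ⟨hxB, -⟩ | ⟨hyB, -⟩ | ⟨hxB, -⟩
  · exact hagree
  all_goals exfalso
  exacts [hP ha hxE hxa, hP ha hxE hxa, hP ha hyE hya, hB hxE hxB, hB hyE hyB, hB hxE hxB]

theorem rel_iff_of_mem_extSet_of_mem_brSet (h : IsTournament r) (hind : IndecomposableOn r X)
    (hX : 3 ≤ X.ncard) {x y : V} (hxE : x ∈ ExtSet r X) (hyB : y ∈ BrSet r X)
    (hdec : ¬ IndecomposableOn r (X ∪ {x, y})) : ∀ w ∈ X, (r y x ↔ r y w) := by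
  have hXnt : X.Nontrivial := (Set.one_lt_ncard_iff_nontrivial_and_finite.1 (by omega)).1
  have hxB := (disjoint_extSet_brSet (r := r) hXnt).notMem_of_mem_left hxE
  have hxP := fun {a} (ha : a ∈ X) =>
    (disjoint_extSet_xuSet (r := r) hXnt ha).notMem_of_mem_left hxE
  rcases cases_of_not_indecomposableOn_union_pair h hind hxE.1 hyB.1 hdec with
    hagree | ⟨a, ha, hxa, -⟩ | ⟨a, ha, hxa, -⟩ | ⟨a, ha, hya, -⟩ | ⟨hxB', -⟩ | ⟨-, hyx⟩ | ⟨hxB', -⟩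
  · refine absurd ((mem_brSet_iff h).2 ⟨hxE.1, fun p hp q hq => ?_⟩) hxB
    have hswap : ∀ w ∈ X, (r x w ↔ r y w) := fun w hw => (h.rel_iff_rel_swap
      (ne_of_mem_of_not_mem hw hxE.1) (ne_of_mem_of_not_mem hw hyB.1)).1 (hagree w hw)
    exact ((hswap p hp).trans (((mem_brSet_iff h).1 hyB).2 p hp q hq)).trans (hswap q hq).symm
  · exact absurd hxa (hxP ha)
  · exact absurd hxa (hxP ha)
  · exact absurd hya ((disjoint_brSet_xuSet h hind hX ha).notMem_of_mem_left hyB)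
  · exact absurd hxB' hxB
  · exact hyx
  · exact absurd hxB' hxB

theorem rel_iff_of_mem_xuSet (h : IsTournament r) (hind : IndecomposableOn r X)
    (hX : 3 ≤ X.ncard) {x y u : V} (hu : u ∈ X) (hx : x ∉ X)
    (hxP : ∀ a ∈ X, x ∉ XuSet r X a) (hyu : y ∈ XuSet r X u)
    (hdec : ¬ IndecomposableOn r (X ∪ {x, y})) : r x y ↔ r x u := by
  have hyB := (disjoint_brSet_xuSet h hind hX hu).notMem_of_mem_right hyu
  rcases cases_of_not_indecomposableOn_union_pair h hind hx hyu.1 hdec with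
    hagree | ⟨a, ha, hxa, -⟩ | ⟨a, ha, hxa, -⟩ | ⟨a, ha, hya, hxay⟩ | ⟨-, hyB'⟩ | ⟨hyB', -⟩ |
      ⟨-, hxy⟩
  · refine absurd ((mem_xuSet_iff h hu).2 ⟨hx, fun w hw hwu => ?_⟩) (hxP u hu)
    exact (((mem_xuSet_iff h hu).1 hyu).2 w hw hwu).trans (hagree w hw).symm
  · exact absurd hxa (hxP a ha)
  · exact absurd hxa (hxP a ha)
  · obtain rfl := eq_of_mem_xuSet_of_rel_iff h hind hX ha hu hya hyu fun _ _ => Iff.rfl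
    exact hxay.symm
  · exact absurd hyB' hyB
  · exact absurd hyB' hyB
  · exact hxy u hu

theorem rel_iff_of_mem_xuSet_of_mem_xuSet (h : IsTournament r) (hind : IndecomposableOn r X)
    (hX : 3 ≤ X.ncard) {x y u v : V} (hu : u ∈ X) (hv : v ∈ X) (huv : u ≠ v)
    (hxu : x ∈ XuSet r X u) (hyv : y ∈ XuSet r X v)
    (hdec : ¬ IndecomposableOn r (X ∪ {x, y})) : r y x ↔ r y u := by
  have hxB := (disjoint_brSet_xuSet h hind hX hu).notMem_of_mem_right hxu
  have hyB := (disjoint_brSet_xuSet h hind hX hv).notMem_of_mem_right hyv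
  have hxu_eq := fun {a} (ha : a ∈ X) (hxa : x ∈ XuSet r X a) =>
    eq_of_mem_xuSet_of_rel_iff h hind hX ha hu hxa hxu fun _ _ => Iff.rfl
  have hyv_eq := fun {a} (ha : a ∈ X) (hya : y ∈ XuSet r X a) =>
    eq_of_mem_xuSet_of_rel_iff h hind hX ha hv hya hyv fun _ _ => Iff.rfl
  rcases cases_of_not_indecomposableOn_union_pair h hind hxu.1 hyv.1 hdec with
    hagree | ⟨a, ha, hxa, hya⟩ | ⟨a, ha, hxa, hyax⟩ | ⟨a, ha, hya, hxay⟩ | ⟨hxB', -⟩ | ⟨hyB', -⟩ |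
      ⟨hxB', -⟩
  · exact absurd (eq_of_mem_xuSet_of_rel_iff h hind hX hu hv hxu hyv hagree) huv
  · exact absurd ((hxu_eq ha hxa).symm.trans (hyv_eq ha hya)) huv
  · obtain rfl := hxu_eq ha hxa
    exact hyax.symm
  · obtain rfl := hyv_eq ha hya
    have hxy : x ≠ y := by
      rintro rfl
      exact huv (hyv_eq hu hxu)
    calc r y x ↔ r a x :=
          ((h.rel_iff_rel_swap (ne_of_mem_of_not_mem ha hxu.1).symm hxy).1 hxay).symm
      _ ↔ r a u := (((mem_xuSet_iff h hu).1 hxu).2 a ha huv.symm).symm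
      _ ↔ r y u := (h.rel_iff_rel_swap huv (ne_of_mem_of_not_mem hu hyv.1)).1
        (((mem_xuSet_iff h ha).1 hyv).2 u hu huv)
  · exact absurd hxB' hxB
  · exact absurd hyB' hyB
  · exact absurd hxB' hxB

theorem isIntervalOn_univ_insert_xuSet (h : IsTournament r) (hind : IndecomposableOn r X)
    (hX : 3 ≤ X.ncard)
    (hno : ∀ x y : V, x ≠ y → x ∉ X → y ∉ X → ¬ IndecomposableOn r (X ∪ {x, y}))
    {u : V} (hu : u ∈ X) :
    IsIntervalOn r Set.univ (insert u (XuSet r X u)) := by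
  refine h.isIntervalOn_of_rel_iff (Set.subset_univ _) (c := u) fun z _ hzK i hi => ?_
  rcases hi with rfl | hp
  · rfl
  have hzu : z ≠ u := fun hzu => hzK (Or.inl hzu)
  have hzp : z ≠ i := fun hzp => hzK (Or.inr (hzp ▸ hp))
  by_cases hzX : z ∈ X
  · exact (((mem_xuSet_iff h hu).1 hp).2 z hzX hzu).symm
  by_cases hzP : ∃ v ∈ X, z ∈ XuSet r X v
  · obtain ⟨v, hv, hzv⟩ := hzP
    have huv : u ≠ v := by
      rintro rfl
      exact hzK (Or.inr hzv)
    exact rel_iff_of_mem_xuSet_of_mem_xuSet h hind hX hu hv huv hp hzv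
      (hno i z hzp.symm hp.1 hzX)
  · push Not at hzP
    exact rel_iff_of_mem_xuSet h hind hX hu hzX hzP hp (hno z i hzp hzX hp.1)

theorem isIntervalOn_univ_union_extSet (h : IsTournament r) (hind : IndecomposableOn r X)
    (hX : 3 ≤ X.ncard)
    (hno : ∀ x y : V, x ≠ y → x ∉ X → y ∉ X → ¬ IndecomposableOn r (X ∪ {x, y}))
    (hEB : ∀ z ∉ X, z ∈ ExtSet r X ∨ z ∈ BrSet r X) :
    IsIntervalOn r Set.univ (X ∪ ExtSet r X) := by
  have hXnt : X.Nontrivial := (Set.one_lt_ncard_iff_nontrivial_and_finite.1 (by omega)).1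
  obtain ⟨a, ha⟩ := hXnt.nonempty
  refine h.isIntervalOn_of_rel_iff (Set.subset_univ _) (c := a) fun z _ hzK i hi => ?_
  have hzB : z ∈ BrSet r X :=
    (hEB z fun hzX => hzK (Or.inl hzX)).resolve_left fun hzE => hzK (Or.inr hzE)
  rcases hi with hiX | hiE
  · exact ((mem_brSet_iff h).1 hzB).2 i hiX a ha
  · have hiz : i ≠ z := by
      rintro rfl
      exact (disjoint_extSet_brSet hXnt).notMem_of_mem_left hiE hzB
    exact rel_iff_of_mem_extSet_of_mem_brSet h hind hX hiE hzB (hno i z hiz hiE.1 hzB.1) a ha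

theorem isIntervalOn_univ_compl (h : IsTournament r) (hind : IndecomposableOn r X)
    (hX : X.Nontrivial)
    (hno : ∀ x y : V, x ≠ y → x ∉ X → y ∉ X → ¬ IndecomposableOn r (X ∪ {x, y}))
    (hE : ∀ z ∉ X, z ∈ ExtSet r X) : IsIntervalOn r Set.univ Xᶜ := by
  refine h.isIntervalOn_iff.2 ⟨Set.subset_univ _, fun z _ hzX a ha b hb => ?_⟩
  by_cases hab : a = b
  · rw [hab]
  exact rel_iff_of_mem_extSet_of_mem_extSet h hind hX (hE a ha) (hE b hb) (hno a b hab ha hb) z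
    (not_not.1 hzX)

end

/-- In an indecomposable tournament, any indecomposable induced
subtournament on `X` with `|X| ≥ 3` and at least 2 outside vertices extends
indecomposably by two vertices. -/
theorem two_vertex_extension {V : Type*} [Fintype V] (r : V → V → Prop) (X : Set V)
    (h : IsTournament r) (hT : IndecomposableOn r Set.univ)
    (hX : 3 ≤ X.ncard) (hout : 2 ≤ Xᶜ.ncard) (hind : IndecomposableOn r X) :
    ∃ x y : V, x ≠ y ∧ x ∉ X ∧ y ∉ X ∧ IndecomposableOn r (X ∪ {x, y}) := by
  by_contra! hno
  have hXnt : X.Nontrivial := (Set.one_lt_ncard_iff_nontrivial_and_finite.1 (by omega)).1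
  by_cases hP : ∃ u ∈ X, ∃ x, x ∈ XuSet r X u
  · obtain ⟨u, hu, x, hx⟩ := hP
    obtain ⟨w, hw, hwu, -⟩ := X.exists_mem_ne_ne_of_three_le_ncard hX u u
    rcases hT.subset_of_isIntervalOn (isIntervalOn_univ_insert_xuSet h hind hX hno hu)
      (Set.nontrivial_of_pair_subset (ne_of_mem_of_not_mem hu hx.1)
        (Set.insert_subset (Or.inl rfl) (Set.singleton_subset_iff.2 (Or.inr hx))))
      (Set.mem_univ w) with rfl | hwP
    exacts [hwu rfl, hwP.1 hw]
  have hEB : ∀ z ∉ X, z ∈ ExtSet r X ∨ z ∈ BrSet r X := fun z hz =>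
    (mem_extSet_or_mem_brSet_or_mem_xuSet h hind hz).imp_right
      (Or.resolve_right · fun ⟨u, hu, hzu⟩ => hP ⟨u, hu, z, hzu⟩)
  by_cases hB : ∃ b, b ∈ BrSet r X
  · obtain ⟨b, hb⟩ := hB
    rcases hT.subset_of_isIntervalOn (isIntervalOn_univ_union_extSet h hind hX hno hEB)
      (hXnt.mono Set.subset_union_left) (Set.mem_univ b) with hbX | hbE
    exacts [hb.1 hbX, (disjoint_extSet_brSet hXnt).notMem_of_mem_left hbE hb]
  have hE : ∀ z ∉ X, z ∈ ExtSet r X := fun z hz =>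
    (hEB z hz).resolve_right fun hzB => hB ⟨z, hzB⟩
  obtain ⟨a, ha⟩ := hXnt.nonempty
  exact hT.subset_of_isIntervalOn (isIntervalOn_univ_compl h hind hXnt hno hE)
    (Set.one_lt_ncard_iff_nontrivial.1 (by omega)) (Set.mem_univ a) ha
end
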